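/- For any integer m > 1, there exist infinitely many positive integers k such that k·(m-1)·m^n + 1 is composite for every positive integer n. -/

import Mathlib

/-!
Covering congruences. Let the classes `a i mod j i` cover ℕ, and let `d i > 1` be pairwise
coprime divisors of `m ^ j i - 1` that are prime to `m - 1`. Choosing `k` by the Chinese remainder
theorem with `d i ∣ k (m - 1) m ^ (a i) + 1`, we get `d i ∣ k (m - 1) m ^ n + 1` whenever
`n ≡ a i mod j i`, because `m ^ j i ≡ 1 mod d i`; once `k ≥ ∏ d i` this divisor is proper.

For `m ≥ 3` the covering `0 mod 3, 1 mod 4, 2 mod 6, 4 mod 8, 7 mod 9, 11 mod 12, 3 mod 16,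
10 mod 18, 7 mod 24, 22 mod 36, 43 mod 48, 40 mod 72` works with `d_j` the part of `Φ_j(m)` prime
to 6. Its prime factors `p` do not divide `j`, so `m` has order exactly `j` modulo `p`, which
gives the coprimality conditions; and `d_j > 1` since `Φ_j(m) = Φ_b(m ^ e)` with
`b ∈ {3, 4, 6}`, and these three quadratics take values `> 6` that are divisible neither by 4 nor
by 9. For `m = 2` the moduli 2 and 6 are unavailable (`Φ_2(2) = Φ_6(2) = 3`), and Sierpiński's
covering by the primes 3, 7, 5, 73, 13, 19, 37 is used instead.
-/

open Polynomial

def sierpinskiSet (m : ℤ) : Set ℕ :=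
  {k : ℕ | 0 < k ∧ ∀ n : ℕ, 1 ≤ n →
    1 < (k : ℤ) * (m - 1) * m ^ n + 1 ∧ ¬ Prime ((k : ℤ) * (m - 1) * m ^ n + 1)}

section Covering

theorem isCoprime_of_dvd_pow_sub_one {R : Type*} [CommRing R] {x y : R} {j : ℕ} (hj : 0 < j)
    (h : x ∣ y ^ j - 1) : IsCoprime x y := by
  obtain ⟨c, hc⟩ := h
  exact (IsCoprime.pow_right_iff hj).mp ⟨-c, 1, by linear_combination hc⟩

theorem exists_natCast_dvd_mul_add_one {d : ℕ} (hd : d ≠ 0) {x : ℤ}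
    (hx : IsCoprime (d : ℤ) x) :
    ∃ r : ℕ, (d : ℤ) ∣ r * x + 1 := by
  obtain ⟨u, v, huv⟩ := hx
  refine ⟨((-v) % d).toNat, ?_⟩
  rw [Int.toNat_of_nonneg (Int.emod_nonneg _ (by exact_mod_cast hd))]
  have h : (-v) % d * x + 1 = u * d - (-v - (-v) % d) * x := by linear_combination -huv
  rw [h]
  exact dvd_sub (dvd_mul_left _ _) ((Int.mod_modEq _ _).dvd.mul_right _)

theorem dvd_mul_pow_add_one_of_modEq {m : ℤ} {d j a r k n : ℕ} (hdvd : (d : ℤ) ∣ m ^ j - 1)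
    (hr : (d : ℤ) ∣ r * ((m - 1) * m ^ a) + 1) (hk : k ≡ r [MOD d]) (hn : n % j = a) :
    (d : ℤ) ∣ k * ((m - 1) * m ^ n) + 1 := by
  rw [← ZMod.intCast_zmod_eq_zero_iff_dvd] at hdvd hr ⊢
  push_cast at hdvd hr ⊢
  rw [← Nat.div_add_mod n j, hn, pow_add, pow_mul, sub_eq_zero.mp hdvd, one_pow, one_mul,
    (ZMod.natCast_eq_natCast_iff _ _ _).mpr hk]
  exact hr

theorem not_prime_of_natCast_dvd {d : ℕ} {N : ℤ} (hd : 1 < d) (hdN : (d : ℤ) ∣ N)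
    (hlt : (d : ℤ) < N) : ¬ Prime N := by
  rw [Int.prime_iff_natAbs_prime]
  exact Nat.not_prime_of_dvd_of_lt (Int.natCast_dvd.mp hdN) hd (by omega)

theorem mem_sierpinskiSet {m : ℤ} (hm : 1 < m) {k : ℕ} (hk : 0 < k)
    (h : ∀ n, ∃ d : ℕ, 1 < d ∧ d ≤ k ∧ (d : ℤ) ∣ k * ((m - 1) * m ^ n) + 1) :
    k ∈ sierpinskiSet m := by
  refine ⟨hk, fun n _ => ?_⟩
  obtain ⟨d, hd, hdk, hdvd⟩ := h n
  have hmn : 1 ≤ (m - 1) * m ^ n :=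
    one_le_mul_of_one_le_of_one_le (by omega) (one_le_pow₀ hm.le)
  have hkN : (k : ℤ) < k * ((m - 1) * m ^ n) + 1 := by nlinarith
  rw [mul_assoc]
  exact ⟨by omega, not_prime_of_natCast_dvd hd hdvd (by omega)⟩

theorem sierpinskiSet_infinite_of_covering {ι : Type*} [Fintype ι] {m : ℤ} (hm : 1 < m)
    {d j a : ι → ℕ} (hd : ∀ i, 1 < d i) (hj : ∀ i, 0 < j i)
    (hdvd : ∀ i, (d i : ℤ) ∣ m ^ j i - 1)
    (hcop : ∀ i, IsCoprime (d i : ℤ) (m - 1))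
    (hpair : Pairwise fun i i' => Nat.Coprime (d i) (d i'))
    (hcov : ∀ n, ∃ i, n % j i = a i) : (sierpinskiSet m).Infinite := by
  have hd0 : ∀ i, d i ≠ 0 := fun i => (hd i).ne_bot
  choose r hr using fun i => exists_natCast_dvd_mul_add_one (hd0 i)
    ((hcop i).mul_right ((isCoprime_of_dvd_pow_sub_one (hj i) (hdvd i)).pow_right (n := a i)))
  obtain ⟨k₀, hk₀⟩ := Nat.chineseRemainderOfFinset r d Finset.univ (fun i _ => hd0 i)
    fun i _ i' _ h => hpair h
  set P := ∏ i, d i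
  have hP : 0 < P := Finset.prod_pos fun i _ => (hd i).pos
  refine Set.infinite_of_injective_forall_mem (f := fun t : ℕ => k₀ + (t + 1) * P)
    (fun t t' h => by simpa [hP.ne'] using h) fun t => mem_sierpinskiSet hm (by positivity) ?_
  intro n
  obtain ⟨i, hi⟩ := hcov n
  have hdP : d i ∣ P := Finset.dvd_prod_of_mem d (Finset.mem_univ i)
  have hk : k₀ + (t + 1) * P ≡ r i [MOD d i] :=
    calc k₀ + (t + 1) * P ≡ k₀ + 0 [MOD d i] :=
          (Nat.modEq_zero_iff_dvd.mpr (dvd_mul_of_dvd_right hdP _)).add_left k₀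
      _ ≡ r i [MOD d i] := hk₀ i (Finset.mem_univ i)
  exact ⟨d i, hd i, (Nat.le_of_dvd hP hdP).trans (by nlinarith),
    dvd_mul_pow_add_one_of_modEq (hdvd i) (hr i) hk hi⟩

theorem forall_exists_mod_eq_of_forall_lt {ι : Type*} {j a : ι → ℕ} {N : ℕ} (hN : 0 < N)
    (hjN : ∀ i, j i ∣ N) (h : ∀ n < N, ∃ i, n % j i = a i) (n : ℕ) :
    ∃ i, n % j i = a i := by
  obtain ⟨i, hi⟩ := h (n % N) (Nat.mod_lt n hN)
  exact ⟨i, by rwa [Nat.mod_mod_of_dvd n (hjN i)] at hi⟩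

end Covering

theorem eval_cyclotomic_mul {R : Type*} [CommRing R] {b e : ℕ}
    (he : ∀ p, p.Prime → p ∣ e → p ∣ b) (x : R) :
    (cyclotomic (b * e) R).eval x = (cyclotomic b R).eval (x ^ e) := by
  induction e using Nat.recOnMul generalizing b x with
  | zero =>
    obtain rfl : b = 0 := by
      by_contra hb
      obtain ⟨p, hbp, hp⟩ := Nat.exists_infinite_primes (b + 1)
      exact absurd (Nat.le_of_dvd (by omega) (he p hp (dvd_zero p))) (by omega)
    simp
  | one => simp
  | prime p hp => rw [← cyclotomic_expand_eq_cyclotomic hp (he p hp dvd_rfl), expand_eval]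
  | mul e₁ e₂ ih₁ ih₂ =>
    rw [← mul_assoc, ih₂ fun p hp h => (he p hp (dvd_mul_of_dvd_right h _)).mul_right _,
      ih₁ fun p hp h => he p hp (dvd_mul_of_dvd_left h _), ← pow_mul, mul_comm e₂]

def sixFreePart (x : ℤ) : ℕ := ordCompl[3] (ordCompl[2] x.natAbs)

theorem sixFreePart_dvd (x : ℤ) : (sixFreePart x : ℤ) ∣ x :=
  Int.natCast_dvd.mpr ((Nat.ordCompl_dvd _ 3).trans (Nat.ordCompl_dvd _ 2))

theorem coprime_sixFreePart_six {x : ℤ} (hx : x ≠ 0) : Nat.Coprime (sixFreePart x) 6 := by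
  have hx' : x.natAbs ≠ 0 := Int.natAbs_ne_zero.mpr hx
  have h₂ : ¬ 2 ∣ sixFreePart x := fun h =>
    Nat.not_dvd_ordCompl Nat.prime_two hx' (h.trans (Nat.ordCompl_dvd _ 3))
  have h₃ : ¬ 3 ∣ sixFreePart x :=
    Nat.not_dvd_ordCompl Nat.prime_three (Nat.ordCompl_pos 2 hx').ne'
  exact Nat.Coprime.mul_right (m := 2) (n := 3)
    (Nat.prime_two.coprime_iff_not_dvd.mpr h₂).symm
    (Nat.prime_three.coprime_iff_not_dvd.mpr h₃).symm

theorem ordProj_le_of_not_sq_dvd {n p : ℕ} (hp : p.Prime) (h : ¬ p ^ 2 ∣ n) :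
    ordProj[p] n ≤ p := by
  have hv : n.factorization p ≤ 1 := by
    by_contra! hv
    exact h ((pow_dvd_pow p hv).trans (Nat.ordProj_dvd n p))
  calc p ^ n.factorization p ≤ p ^ 1 := Nat.pow_le_pow_right hp.pos hv
    _ = p := pow_one p

theorem one_lt_sixFreePart {x : ℤ} (h6 : 6 < x) (h4 : ¬ 4 ∣ x) (h9 : ¬ 9 ∣ x) :
    1 < sixFreePart x := by
  set n := x.natAbs
  have h₂ := ordProj_le_of_not_sq_dvd (n := n) Nat.prime_two (by omega)
  have h₃ := ordProj_le_of_not_sq_dvd (n := ordCompl[2] n) Nat.prime_three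
    fun h => h9 (by have := h.trans ((Nat.ordCompl_dvd n 2)); omega)
  have hn : ordProj[2] n * (ordProj[3] (ordCompl[2] n) * sixFreePart x) = n := by
    rw [sixFreePart, Nat.ordProj_mul_ordCompl_eq_self, Nat.ordProj_mul_ordCompl_eq_self]
  by_contra! h1
  have : n ≤ 2 * (3 * 1) := by rw [← hn]; gcongr
  omega

theorem one_lt_sixFreePart_eval_cyclotomic {b : ℕ} (hb : b = 3 ∨ b = 4 ∨ b = 6) {y : ℤ}
    (hy : 3 ≤ y) : 1 < sixFreePart ((cyclotomic b ℤ).eval y) := by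
  have hdvd (n : ℕ) [NeZero n] {x : ℤ} (h : (x : ZMod n) ≠ 0) : ¬ (n : ℤ) ∣ x :=
    (ZMod.intCast_zmod_eq_zero_iff_dvd x n).not.mp h
  obtain h | h | h : (cyclotomic b ℤ).eval y = y ^ 2 + y + 1 ∨
      (cyclotomic b ℤ).eval y = y ^ 2 + 1 ∨ (cyclotomic b ℤ).eval y = y ^ 2 - y + 1 := by
    rcases hb with rfl | rfl | rfl
    · simp [cyclotomic_three]
    · rw [show 4 = 2 * 2 from rfl, eval_cyclotomic_mul fun _ _ h => h]
      simp
    · simp [cyclotomic_six]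
  all_goals
    rw [h]
    refine one_lt_sixFreePart (by nlinarith) (hdvd 4 ?_) (hdvd 9 ?_)
    · push_cast; generalize (y : ZMod 4) = z; revert z; decide
    · push_cast; generalize (y : ZMod 9) = z; revert z; decide

theorem Nat.Prime.eq_two_or_three_of_dvd_six {p : ℕ} (hp : p.Prime) (h : p ∣ 6) :
    p = 2 ∨ p = 3 := by
  have := Nat.le_of_dvd (by norm_num) h
  interval_cases p <;> simp_all +decide

theorem exists_eq_three_four_or_six_mul {j : ℕ} (hj : 2 < j)
    (hj6 : ∀ p, p.Prime → p ∣ j → p ∣ 6) :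
    ∃ b e, (b = 3 ∨ b = 4 ∨ b = 6) ∧ j = b * e ∧
      ∀ p, p.Prime → p ∣ e → p ∣ b := by
  have hprime (p : ℕ) (hp : p.Prime) (hpj : p ∣ j) : p = 2 ∨ p = 3 :=
    hp.eq_two_or_three_of_dvd_six (hj6 p hp hpj)
  by_cases h2 : 2 ∣ j <;> by_cases h3 : 3 ∣ j
  · obtain ⟨e, rfl⟩ := Nat.Coprime.mul_dvd_of_dvd_of_dvd (by norm_num) h2 h3
    exact ⟨6, e, by simp, rfl, fun p hp h => hj6 p hp (dvd_mul_of_dvd_right h _)⟩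
  · obtain ⟨j', rfl⟩ := h2
    obtain ⟨e, rfl⟩ : 2 ∣ j' := by
      have hq := Nat.minFac_dvd j'
      rcases hprime _ (Nat.minFac_prime (by omega)) (dvd_mul_of_dvd_right hq 2) with h | h
      · exact h ▸ hq
      · exact absurd (dvd_mul_of_dvd_right (h ▸ hq) 2) h3
    refine ⟨4, e, by simp, by ring, fun p hp h => ?_⟩
    rcases hprime p hp (dvd_mul_of_dvd_right (dvd_mul_of_dvd_right h 2) 2) with rfl | rfl
    · norm_num
    · exact absurd (dvd_mul_of_dvd_right (dvd_mul_of_dvd_right h 2) 2) h3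
  · obtain ⟨e, rfl⟩ := h3
    refine ⟨3, e, by simp, rfl, fun p hp h => ?_⟩
    rcases hprime p hp (dvd_mul_of_dvd_right h 3) with rfl | rfl
    · exact absurd (dvd_mul_of_dvd_right h 3) h2
    · exact dvd_rfl
  · rcases hprime _ (Nat.minFac_prime (by omega)) (Nat.minFac_dvd j) with h | h
    · exact absurd (h ▸ Nat.minFac_dvd j) h2
    · exact absurd (h ▸ Nat.minFac_dvd j) h3

noncomputable def cyclotomicPart (j : ℕ) (m : ℤ) : ℕ :=
  sixFreePart ((cyclotomic j ℤ).eval m)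

section CyclotomicPart

variable {j : ℕ} {m : ℤ}

theorem cyclotomicPart_dvd_pow_sub_one (j : ℕ) (m : ℤ) :
    (cyclotomicPart j m : ℤ) ∣ m ^ j - 1 :=
  (sixFreePart_dvd _).trans (by simpa using eval_dvd (x := m) (cyclotomic.dvd_X_pow_sub_one j ℤ))

theorem one_lt_cyclotomicPart (hj : 2 < j) (hj6 : ∀ p, p.Prime → p ∣ j → p ∣ 6)
    (hm : 3 ≤ m) :
    1 < cyclotomicPart j m := by
  obtain ⟨b, e, hb, rfl, he⟩ := exists_eq_three_four_or_six_mul hj hj6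
  rw [cyclotomicPart, eval_cyclotomic_mul he]
  have he0 : e ≠ 0 := by rintro rfl; omega
  exact one_lt_sixFreePart_eval_cyclotomic hb (hm.trans (le_self_pow₀ (by omega) he0))

theorem orderOf_eq_of_dvd_cyclotomicPart (hj : 2 < j) (hj6 : ∀ p, p.Prime → p ∣ j → p ∣ 6)
    {p : ℕ} [hp : Fact p.Prime] (hpd : p ∣ cyclotomicPart j m) : orderOf (m : ZMod p) = j := by
  have hp6 : ¬ p ∣ 6 := (Nat.Prime.coprime_iff_not_dvd hp.out).mp
    ((coprime_sixFreePart_six (cyclotomic_pos hj m).ne').coprime_dvd_left hpd)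
  have : NeZero (j : ZMod p) :=
    ⟨by rw [Ne, ZMod.natCast_eq_zero_iff]; exact fun h => hp6 (hj6 p hp.out h)⟩
  have hroot : (cyclotomic j (ZMod p)).IsRoot (m : ZMod p) := by
    rw [← map_cyclotomic_int, IsRoot, eval_intCast_map, eq_intCast,
      ZMod.intCast_zmod_eq_zero_iff_dvd]
    exact (Int.natCast_dvd_natCast.mpr hpd).trans (sixFreePart_dvd _)
  exact (isRoot_cyclotomic_iff.mp hroot).eq_orderOf.symm

theorem coprime_cyclotomicPart {i : ℕ} (hi : 2 < i) (hj : 2 < j)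
    (hi6 : ∀ p, p.Prime → p ∣ i → p ∣ 6) (hj6 : ∀ p, p.Prime → p ∣ j → p ∣ 6)
    (hij : i ≠ j) :
    Nat.Coprime (cyclotomicPart i m) (cyclotomicPart j m) :=
  Nat.coprime_of_dvd fun p hp hpi hpj => by
    have := Fact.mk hp
    exact hij ((orderOf_eq_of_dvd_cyclotomicPart hi hi6 hpi).symm.trans
      (orderOf_eq_of_dvd_cyclotomicPart hj hj6 hpj))

theorem isCoprime_cyclotomicPart_sub_one (hj : 2 < j)
    (hj6 : ∀ p, p.Prime → p ∣ j → p ∣ 6) :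
    IsCoprime (cyclotomicPart j m : ℤ) (m - 1) := by
  rw [Int.isCoprime_iff_gcd_eq_one, Int.gcd, Int.natAbs_natCast]
  refine Nat.coprime_of_dvd fun p hp hpd hpm => ?_
  have := Fact.mk hp
  have hm1 : (m : ZMod p) = 1 := by
    rw [← sub_eq_zero, ← Int.cast_one, ← Int.cast_sub, ZMod.intCast_zmod_eq_zero_iff_dvd]
    exact Int.natCast_dvd.mpr hpm
  have := orderOf_eq_of_dvd_cyclotomicPart hj hj6 hpd
  rw [hm1, orderOf_one] at this
  omega

end CyclotomicPart

theorem sierpinskiSet_two_infinite : (sierpinskiSet 2).Infinite :=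
  sierpinskiSet_infinite_of_covering (d := ![3, 7, 5, 73, 13, 19, 37])
    (j := ![2, 3, 4, 9, 12, 18, 36]) (a := ![0, 1, 3, 5, 9, 17, 29]) (by norm_num) (by decide)
    (by decide) (by decide) (fun _ => by norm_num [isCoprime_one_right])
    (by unfold Pairwise; decide)
    (forall_exists_mod_eq_of_forall_lt (N := 36) (by norm_num) (by decide) (by decide))

theorem sierpinskiSet_infinite_of_three_le {m : ℤ} (hm : 3 ≤ m) :
    (sierpinskiSet m).Infinite := by
  let j : Fin 12 → ℕ := ![3, 4, 6, 8, 9, 12, 16, 18, 24, 36, 48, 72]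
  have hj : ∀ i, 2 < j i := by decide
  have hj6 (i : Fin 12) (p : ℕ) (hp : p.Prime) (hpj : p ∣ j i) : p ∣ 6 :=
    hp.dvd_of_dvd_pow (hpj.trans ((by decide : ∀ i, j i ∣ 6 ^ 4) i))
  have hinj : Function.Injective j := by decide
  exact sierpinskiSet_infinite_of_covering (by omega) (d := fun i => cyclotomicPart (j i) m)
    (a := ![0, 1, 2, 4, 7, 11, 3, 10, 7, 22, 43, 40])
    (fun i => one_lt_cyclotomicPart (hj i) (hj6 i) hm) (fun i => two_pos.trans (hj i))
    (fun i => cyclotomicPart_dvd_pow_sub_one _ _)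
    (fun i => isCoprime_cyclotomicPart_sub_one (hj i) (hj6 i))
    (fun i i' h => coprime_cyclotomicPart (hj i) (hj i') (hj6 i) (hj6 i') (hinj.ne h))
    (forall_exists_mod_eq_of_forall_lt (N := 144) (by norm_num) (by decide) (by decide +kernel))

theorem stmt_15 (m : ℤ) (hm : 1 < m) :
    {k : ℕ | 0 < k ∧ ∀ n : ℕ, 1 ≤ n →
      1 < (k : ℤ) * (m - 1) * m ^ n + 1 ∧
        ¬ Prime ((k : ℤ) * (m - 1) * m ^ n + 1)}.Infinite := by
  obtain rfl | hm : m = 2 ∨ 3 ≤ m := by omega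
  · exact sierpinskiSet_two_infinite
  · exact sierpinskiSet_infinite_of_three_le hm
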